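/- Let d ≥ 3, Ω ⊂ ℝ^d a bounded measurable set of diameter at most M, 0 < ε ≤ M, and F ∈ L^d(Ω). Suppose G : Ω × Ω → ℝ is measurable and satisfies |G(x,y)| ≤ C₀·|x−y|^{2−d} when |x−y| < ε and |G(x,y)| ≤ C₀·ε·|x−y|^{1−d} when |x−y| ≥ ε. Then for every x ∈ Ω, ∫_Ω |G(x,y)|·|F(y)| dy ≤ C·ε·(ln(M/ε + 2))^{1−1/d}·‖F‖_{L^d(Ω)}, where C depends only on d and C₀. -/

import Mathlib

open MeasureTheory Metric Bornology
open scoped ENNReal NNReal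

noncomputable section

abbrev E (d : ℕ) := EuclideanSpace ℝ (Fin d)

/-!
Hölder's inequality with exponents `d` and `q = d/(d-1)` reduces the claim to
`∫_Ω |G(x,y)|^q dy ≲ ε^q log(M/ε + 2)`. In polar coordinates around `x` the near part
`|x-y| < ε` integrates `r^{(2-d)q + d - 1} = r^{q-1}` and contributes `≲ ε^q`, while the far
part `ε ≤ |x-y| ≤ M` integrates `ε^q r^{(1-d)q + d - 1} = ε^q / r` and contributes
`ε^q log(M/ε)`. Taking the `q`-th root turns `log^{1/q}` into `log^{1-1/d}`.
-/

open Set Module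

theorem lintegral_Ioo_rpow {a R : ℝ} (ha : -1 < a) (hR : 0 < R) :
    ∫⁻ t in Ioo 0 R, ENNReal.ofReal (t ^ a) = ENNReal.ofReal (R ^ (a + 1) / (a + 1)) := by
  have hint : IntegrableOn (fun t : ℝ => t ^ a) (Ioo 0 R) :=
    (intervalIntegral.intervalIntegrable_rpow' ha).1.mono_set Ioo_subset_Ioc_self
  rw [← ofReal_integral_eq_lintegral_ofReal hint, ← integral_Ioc_eq_integral_Ioo,
    ← intervalIntegral.integral_of_le hR.le, integral_rpow (Or.inl ha),
    Real.zero_rpow (by linarith), sub_zero]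
  filter_upwards [ae_restrict_mem measurableSet_Ioo] with t ht
  exact Real.rpow_nonneg ht.1.le a

theorem lintegral_Icc_inv {r R : ℝ} (hr : 0 < r) (hrR : r ≤ R) :
    ∫⁻ t in Icc r R, ENNReal.ofReal t⁻¹ = ENNReal.ofReal (Real.log (R / r)) := by
  have hpos : ∀ t ∈ Icc r R, 0 < t := fun t ht => hr.trans_le ht.1
  have hint : IntegrableOn (fun t : ℝ => t⁻¹) (Icc r R) :=
    (continuousOn_inv₀.mono fun t ht => (hpos t ht).ne').integrableOn_compact isCompact_Icc
  rw [← ofReal_integral_eq_lintegral_ofReal hint, integral_Icc_eq_integral_Ioc,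
    ← intervalIntegral.integral_of_le hrR, integral_inv]
  · rw [uIcc_of_le hrR]
    exact fun h => (hpos 0 h).false
  · filter_upwards [ae_restrict_mem measurableSet_Icc] with t ht
    exact inv_nonneg.2 (hpos t ht).le

theorem ofReal_pow_mul_ofReal_rpow {t : ℝ} (ht : 0 < t) (n : ℕ) (s : ℝ) :
    ENNReal.ofReal (t ^ n) * ENNReal.ofReal (t ^ s) = ENNReal.ofReal (t ^ (n + s)) := by
  rw [← ENNReal.ofReal_mul (pow_nonneg ht.le n), ← Real.rpow_natCast, Real.rpow_add ht]

theorem ofReal_mul_rpow_rpow {a t : ℝ} (ha : 0 ≤ a) (ht : 0 ≤ t) (b : ℝ) {q : ℝ}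
    (hq : 0 ≤ q) :
    ENNReal.ofReal (a * t ^ b) ^ q = ENNReal.ofReal a ^ q * ENNReal.ofReal (t ^ (b * q)) := by
  rw [ENNReal.ofReal_mul ha, ENNReal.mul_rpow_of_nonneg _ _ hq,
    ENNReal.ofReal_rpow_of_nonneg (Real.rpow_nonneg ht b) hq, ← Real.rpow_mul ht]

theorem one_add_log_le_two_mul_log_add_two {t : ℝ} (ht : 1 ≤ t) :
    1 + Real.log t ≤ 2 * Real.log (t + 2) := by
  have hlog : Real.log t ≤ Real.log (t + 2) := Real.log_le_log (by linarith) (by linarith)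
  have hone : 1 ≤ Real.log (t + 2) := by
    rw [Real.le_log_iff_exp_le (by linarith)]
    linarith [Real.exp_one_lt_d9]
  linarith

theorem integral_abs_mul_abs_le_of_lintegral_rpow_le {α : Type*} [MeasurableSpace α]
    {μ : Measure α} {p q : ℝ} (hpq : p.HolderConjugate q) {f g : α → ℝ}
    (hf : AEMeasurable f μ) (hg : MemLp g (ENNReal.ofReal p) μ) {A : ℝ} (hA : 0 ≤ A)
    (hfA : ∫⁻ a, ENNReal.ofReal |f a| ^ q ∂μ ≤ ENNReal.ofReal A ^ q) :
    ∫ a, |f a| * |g a| ∂μ ≤ A * (eLpNorm g (ENNReal.ofReal p) μ).toReal := by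
  have hLq : (∫⁻ a, ENNReal.ofReal |f a| ^ q ∂μ) ^ (1 / q) ≤ ENNReal.ofReal A := by
    calc _ ≤ (ENNReal.ofReal A ^ q) ^ (1 / q) := by gcongr; exact hpq.symm.one_div_nonneg
      _ = ENNReal.ofReal A := by rw [one_div, ENNReal.rpow_rpow_inv hpq.symm.ne_zero]
  have hLp :
      (∫⁻ a, ENNReal.ofReal |g a| ^ p ∂μ) ^ (1 / p) = eLpNorm g (ENNReal.ofReal p) μ := by
    rw [eLpNorm_eq_lintegral_rpow_enorm_toReal (by simpa using hpq.pos) ENNReal.ofReal_ne_top,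
      ENNReal.toReal_ofReal hpq.nonneg]
    simp only [Real.enorm_eq_ofReal_abs]
  have hHolder := ENNReal.lintegral_mul_le_Lp_mul_Lq μ hpq.symm
    hf.abs.ennreal_ofReal hg.1.aemeasurable.abs.ennreal_ofReal
  rw [hLp] at hHolder
  have hfg : AEStronglyMeasurable (fun a => |f a| * |g a|) μ :=
    (hf.abs.mul hg.1.aemeasurable.abs).aestronglyMeasurable
  rw [integral_eq_lintegral_of_nonneg_ae (.of_forall fun a => by positivity) hfg]
  refine ENNReal.toReal_le_of_le_ofReal (by positivity) ?_
  calc ∫⁻ a, ENNReal.ofReal (|f a| * |g a|) ∂μ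
      = ∫⁻ a, ENNReal.ofReal |f a| * ENNReal.ofReal |g a| ∂μ := by
        simp only [ENNReal.ofReal_mul (abs_nonneg _)]
    _ ≤ ENNReal.ofReal A * eLpNorm g (ENNReal.ofReal p) μ := hHolder.trans (by gcongr)
    _ = ENNReal.ofReal (A * (eLpNorm g (ENNReal.ofReal p) μ).toReal) := by
        rw [ENNReal.ofReal_mul hA, ENNReal.ofReal_toReal hg.2.ne]

section AddHaar

variable {V : Type*} [NormedAddCommGroup V] [NormedSpace ℝ V] [FiniteDimensional ℝ V]
  [MeasurableSpace V] [BorelSpace V] (μ : Measure V) [μ.IsAddHaarMeasure]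

theorem lintegral_fun_norm_addHaar [Nontrivial V] {f : ℝ → ℝ≥0∞} (hf : Measurable f) :
    ∫⁻ x, f ‖x‖ ∂μ = finrank ℝ V * μ (ball 0 1) *
      ∫⁻ r in Ioi (0 : ℝ), ENNReal.ofReal (r ^ (finrank ℝ V - 1)) * f r := by
  have hfst : Measurable fun p : sphere (0 : V) 1 × Ioi (0 : ℝ) => f p.2 := by fun_prop
  calc ∫⁻ x, f ‖x‖ ∂μ
      = ∫⁻ x : ({0}ᶜ : Set V), f ‖x.1‖ ∂(μ.comap (↑)) := by
        rw [lintegral_subtype_comap (measurableSet_singleton _).compl (fun x => f ‖x‖),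
          restrict_compl_singleton]
    _ = ∫⁻ p, f p.2 ∂(μ.toSphere.prod (.volumeIoiPow (finrank ℝ V - 1))) := by
        simpa using μ.measurePreserving_homeomorphUnitSphereProd.lintegral_comp hfst
    _ = μ.toSphere univ * ∫⁻ r, f r ∂(.volumeIoiPow (finrank ℝ V - 1)) := by
        rw [lintegral_prod _ hfst.aemeasurable]
        simp [lintegral_const, mul_comm]
    _ = _ := by
        rw [Measure.volumeIoiPow, lintegral_withDensity_eq_lintegral_mul _ (by fun_prop)
          (by fun_prop), Measure.toSphere_apply_univ]
        exact congrArg _ (lintegral_subtype_comap measurableSet_Ioi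
          fun r => ENNReal.ofReal (r ^ (finrank ℝ V - 1)) * f r)

theorem setLIntegral_preimage_dist_addHaar [Nontrivial V] (c : V) {S : Set ℝ}
    (hS : MeasurableSet S) {f : ℝ → ℝ≥0∞} (hf : Measurable f) :
    ∫⁻ y in (dist · c) ⁻¹' S, f (dist y c) ∂μ = finrank ℝ V * μ (ball 0 1) *
      ∫⁻ r in S ∩ Ioi 0, ENNReal.ofReal (r ^ (finrank ℝ V - 1)) * f r := by
  rw [← lintegral_indicator (hS.preimage (by fun_prop : Measurable (dist · c)))]
  simp_rw [← Function.comp_def f, indicator_comp_right, dist_eq_norm]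
  rw [lintegral_sub_right_eq_self (fun y => S.indicator f ‖y‖) c,
    lintegral_fun_norm_addHaar μ (hf.indicator hS)]
  simp_rw [← indicator_mul_right _ (fun r => ENNReal.ofReal (r ^ (finrank ℝ V - 1)))]
  rw [lintegral_indicator hS, Measure.restrict_restrict hS]

theorem setLIntegral_ball_dist_rpow_addHaar [Nontrivial V] (c : V) {s R : ℝ}
    (hs : -(finrank ℝ V : ℝ) < s) (hR : 0 < R) :
    ∫⁻ y in ball c R, ENNReal.ofReal (dist y c ^ s) ∂μ = finrank ℝ V * μ (ball 0 1) *
      ENNReal.ofReal (R ^ (s + finrank ℝ V) / (s + finrank ℝ V)) := by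
  have hn : ((finrank ℝ V - 1 : ℕ) : ℝ) + s + 1 = s + finrank ℝ V := by
    rw [Nat.cast_sub finrank_pos]; push_cast; ring
  rw [show ball c R = (dist · c) ⁻¹' Iio R from rfl,
    setLIntegral_preimage_dist_addHaar μ c measurableSet_Iio
      (f := fun t => ENNReal.ofReal (t ^ s)) (by fun_prop), Iio_inter_Ioi,
    setLIntegral_congr_fun measurableSet_Ioo fun t ht => ofReal_pow_mul_ofReal_rpow ht.1 _ s,
    lintegral_Ioo_rpow (by linarith) hR, hn]

theorem setLIntegral_closedBall_diff_ball_dist_rpow_neg_finrank [Nontrivial V] (c : V)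
    {r R : ℝ} (hr : 0 < r) (hrR : r ≤ R) :
    ∫⁻ y in closedBall c R \ ball c r, ENNReal.ofReal (dist y c ^ (-(finrank ℝ V : ℝ))) ∂μ =
      finrank ℝ V * μ (ball 0 1) * ENNReal.ofReal (Real.log (R / r)) := by
  have hshell : closedBall c R \ ball c r = (dist · c) ⁻¹' Icc r R := by
    ext y; simp [and_comm]
  have hexp : ∀ t ∈ Icc r R, ENNReal.ofReal (t ^ (finrank ℝ V - 1)) *
      ENNReal.ofReal (t ^ (-(finrank ℝ V : ℝ))) = ENNReal.ofReal t⁻¹ := fun t ht => by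
    rw [ofReal_pow_mul_ofReal_rpow (hr.trans_le ht.1), Nat.cast_sub finrank_pos]
    push_cast
    rw [show ((finrank ℝ V : ℝ) - 1 + -(finrank ℝ V : ℝ)) = -1 by ring, Real.rpow_neg_one]
  rw [hshell, setLIntegral_preimage_dist_addHaar μ c measurableSet_Icc
      (f := fun t => ENNReal.ofReal (t ^ (-(finrank ℝ V : ℝ)))) (by fun_prop),
    inter_eq_left.2 fun t (ht : t ∈ Icc r R) => mem_Ioi.2 (hr.trans_le ht.1),
    setLIntegral_congr_fun measurableSet_Icc hexp, lintegral_Icc_inv hr hrR]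

theorem setLIntegral_ball_kernel_near_rpow_le {q : ℝ}
    (hq : (finrank ℝ V : ℝ).HolderConjugate q) (x : V) {ε C₀ : ℝ} (hε : 0 < ε) (hC₀ : 0 ≤ C₀) :
    ∫⁻ y in ball x ε, ENNReal.ofReal (C₀ * dist x y ^ (2 - (finrank ℝ V : ℝ))) ^ q ∂μ ≤
      ENNReal.ofReal (C₀ * ε) ^ q * (finrank ℝ V * μ (ball 0 1)) := by
  have : Nontrivial V := Module.nontrivial_of_finrank_pos (by exact_mod_cast one_pos.trans hq.lt)
  have hn := hq.sub_one_ne_zero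
  have hq0 := hq.symm.pos
  have hexp : (2 - (finrank ℝ V : ℝ)) * q + finrank ℝ V = q := by
    rw [hq.conjugate_eq]; field_simp; ring
  have hpt : ∀ y ∈ ball x ε, ENNReal.ofReal (C₀ * dist x y ^ (2 - (finrank ℝ V : ℝ))) ^ q =
      ENNReal.ofReal C₀ ^ q * ENNReal.ofReal (dist y x ^ ((2 - (finrank ℝ V : ℝ)) * q)) :=
    fun y _ => by rw [ofReal_mul_rpow_rpow hC₀ dist_nonneg _ hq.symm.nonneg, dist_comm]
  rw [setLIntegral_congr_fun measurableSet_ball hpt,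
    lintegral_const_mul' _ _ (ENNReal.rpow_ne_top_of_nonneg hq0.le ENNReal.ofReal_ne_top),
    setLIntegral_ball_dist_rpow_addHaar μ x (by linarith) hε, hexp,
    ENNReal.ofReal_mul hC₀, ENNReal.mul_rpow_of_nonneg _ _ hq0.le,
    ENNReal.ofReal_rpow_of_nonneg hε.le hq0.le, mul_assoc]
  calc _ ≤ ENNReal.ofReal C₀ ^ q * (finrank ℝ V * (μ (ball 0 1) * ENNReal.ofReal (ε ^ q))) := by
        gcongr
        exact div_le_self (by positivity) hq.symm.lt.le
    _ = _ := by ring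

theorem setLIntegral_closedBall_diff_ball_kernel_far_rpow {q : ℝ}
    (hq : (finrank ℝ V : ℝ).HolderConjugate q) (x : V) {M ε C₀ : ℝ} (hε : 0 < ε) (hεM : ε ≤ M)
    (hC₀ : 0 ≤ C₀) :
    ∫⁻ y in closedBall x M \ ball x ε,
        ENNReal.ofReal (C₀ * ε * dist x y ^ (1 - (finrank ℝ V : ℝ))) ^ q ∂μ =
      ENNReal.ofReal (C₀ * ε) ^ q * (finrank ℝ V * μ (ball 0 1)) *
        ENNReal.ofReal (Real.log (M / ε)) := by
  have : Nontrivial V := Module.nontrivial_of_finrank_pos (by exact_mod_cast one_pos.trans hq.lt)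
  have hn := hq.sub_one_ne_zero
  have hq0 := hq.symm.pos
  have hexp : (1 - (finrank ℝ V : ℝ)) * q = -finrank ℝ V := by
    rw [hq.conjugate_eq]; field_simp; ring
  have hpt : ∀ y ∈ closedBall x M \ ball x ε,
      ENNReal.ofReal (C₀ * ε * dist x y ^ (1 - (finrank ℝ V : ℝ))) ^ q =
        ENNReal.ofReal (C₀ * ε) ^ q * ENNReal.ofReal (dist y x ^ (-(finrank ℝ V : ℝ))) :=
    fun y _ => by
      rw [ofReal_mul_rpow_rpow (by positivity) dist_nonneg _ hq.symm.nonneg, dist_comm, hexp]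
  rw [setLIntegral_congr_fun (measurableSet_closedBall.diff measurableSet_ball) hpt,
    lintegral_const_mul' _ _ (ENNReal.rpow_ne_top_of_nonneg hq0.le ENNReal.ofReal_ne_top),
    setLIntegral_closedBall_diff_ball_dist_rpow_neg_finrank μ x hε hεM]
  ring

theorem setLIntegral_abs_rpow_le_of_kernel_bound {q : ℝ}
    (hq : (finrank ℝ V : ℝ).HolderConjugate q) {Ω : Set V} (hΩ : MeasurableSet Ω) {x : V}
    {M ε C₀ : ℝ} (hε : 0 < ε) (hεM : ε ≤ M) (hC₀ : 0 ≤ C₀) (hΩM : Ω ⊆ closedBall x M)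
    {g : V → ℝ}
    (hnear : ∀ y ∈ Ω, dist x y < ε → |g y| ≤ C₀ * dist x y ^ (2 - (finrank ℝ V : ℝ)))
    (hfar : ∀ y ∈ Ω, ε ≤ dist x y → |g y| ≤ C₀ * ε * dist x y ^ (1 - (finrank ℝ V : ℝ))) :
    ∫⁻ y in Ω, ENNReal.ofReal |g y| ^ q ∂μ ≤ ENNReal.ofReal (C₀ * ε) ^ q *
      (finrank ℝ V * μ (ball 0 1)) * ENNReal.ofReal (1 + Real.log (M / ε)) := by
  have hq0 := hq.symm.nonneg
  have hin : ∫⁻ y in Ω ∩ ball x ε, ENNReal.ofReal |g y| ^ q ∂μ ≤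
      ∫⁻ y in ball x ε, ENNReal.ofReal (C₀ * dist x y ^ (2 - (finrank ℝ V : ℝ))) ^ q ∂μ := by
    refine (lintegral_mono_ae ?_).trans (lintegral_mono_set inter_subset_right)
    filter_upwards [ae_restrict_mem (hΩ.inter measurableSet_ball)] with y hy
    gcongr
    exact hnear y hy.1 (mem_ball'.1 hy.2)
  have hout : ∫⁻ y in Ω \ ball x ε, ENNReal.ofReal |g y| ^ q ∂μ ≤
      ∫⁻ y in closedBall x M \ ball x ε,
        ENNReal.ofReal (C₀ * ε * dist x y ^ (1 - (finrank ℝ V : ℝ))) ^ q ∂μ := by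
    refine (lintegral_mono_ae ?_).trans (lintegral_mono_set (sdiff_subset_sdiff_left hΩM))
    filter_upwards [ae_restrict_mem (hΩ.diff measurableSet_ball)] with y hy
    gcongr
    exact hfar y hy.1 (not_lt.1 fun h => hy.2 (mem_ball'.2 h))
  rw [← lintegral_inter_add_sdiff _ Ω measurableSet_ball]
  calc _ ≤ _ := add_le_add (hin.trans (setLIntegral_ball_kernel_near_rpow_le μ hq x hε hC₀))
        (hout.trans (setLIntegral_closedBall_diff_ball_kernel_far_rpow μ hq x hε hεM hC₀).le)
    _ = _ := by
      rw [ENNReal.ofReal_add zero_le_one (Real.log_nonneg ((one_le_div hε).2 hεM)),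
        ENNReal.ofReal_one]
      ring

theorem integral_abs_mul_abs_le_of_kernel_bound {q : ℝ}
    (hq : (finrank ℝ V : ℝ).HolderConjugate q) {Ω : Set V} (hΩ : MeasurableSet Ω) {x : V}
    {M ε C₀ : ℝ} (hε : 0 < ε) (hεM : ε ≤ M) (hC₀ : 0 ≤ C₀) (hΩM : Ω ⊆ closedBall x M)
    {G F : V → ℝ} (hG : AEMeasurable G (μ.restrict Ω))
    (hF : MemLp F (finrank ℝ V) (μ.restrict Ω))
    (hnear : ∀ y ∈ Ω, dist x y < ε → |G y| ≤ C₀ * dist x y ^ (2 - (finrank ℝ V : ℝ)))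
    (hfar : ∀ y ∈ Ω, ε ≤ dist x y → |G y| ≤ C₀ * ε * dist x y ^ (1 - (finrank ℝ V : ℝ))) :
    ∫ y in Ω, |G y| * |F y| ∂μ ≤
      C₀ * (2 * (finrank ℝ V * μ (ball 0 1)).toReal) ^ (1 / q) * ε *
        Real.log (M / ε + 2) ^ (1 / q) * (eLpNorm F (finrank ℝ V) (μ.restrict Ω)).toReal := by
  set κ := ((finrank ℝ V : ℝ≥0∞) * μ (ball 0 1)).toReal
  set L := Real.log (M / ε + 2)
  have hq0 := hq.symm.pos
  have hL0 : 0 ≤ L := Real.log_nonneg (by linarith [div_pos (hε.trans_le hεM) hε])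
  have hA : C₀ * (2 * κ) ^ (1 / q) * ε * L ^ (1 / q) = C₀ * ε * (2 * κ * L) ^ (1 / q) := by
    rw [Real.mul_rpow (by positivity) hL0]; ring
  rw [← ENNReal.ofReal_natCast] at hF ⊢
  rw [hA]
  refine integral_abs_mul_abs_le_of_lintegral_rpow_le hq hG hF (by positivity)
    ((setLIntegral_abs_rpow_le_of_kernel_bound μ hq hΩ hε hεM hC₀ hΩM hnear hfar).trans ?_)
  rw [ofReal_mul_rpow_rpow (by positivity) (by positivity) _ hq0.le, one_div_mul_cancel hq0.ne',
    Real.rpow_one, mul_assoc,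
    ← ENNReal.ofReal_toReal (a := (finrank ℝ V : ℝ≥0∞) * μ (ball 0 1)) (by finiteness),
    ← ENNReal.ofReal_mul ENNReal.toReal_nonneg]
  have hL := one_add_log_le_two_mul_log_add_two ((one_le_div hε).2 hεM)
  have hκ : 0 ≤ κ := ENNReal.toReal_nonneg
  exact mul_le_mul_right (ENNReal.ofReal_le_ofReal (by nlinarith)) _

end AddHaar

/-- If |G(x,y)| ≤ C₀|x−y|^{2−d} for |x−y| < ε and |G(x,y)| ≤ C₀ ε |x−y|^{1−d} for
|x−y| ≥ ε, then ∫_Ω |G(x,y)||F(y)| dy ≤ C ε (ln(M/ε+2))^{1−1/d} ‖F‖_{L^d(Ω)}. -/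
theorem stmt_5 (d : ℕ) (hd : 3 ≤ d) (C₀ : ℝ) (hC₀ : 0 < C₀) :
    ∃ C : ℝ, 0 < C ∧ ∀ (Ω : Set (E d)) (M ε : ℝ) (F : E d → ℝ) (G : E d → E d → ℝ),
      MeasurableSet Ω → IsBounded Ω → Metric.diam Ω ≤ M → 0 < ε → ε ≤ M →
      Measurable (Function.uncurry G) →
      MemLp F (d : ℝ≥0∞) (volume.restrict Ω) →
      (∀ x ∈ Ω, ∀ y ∈ Ω, dist x y < ε → |G x y| ≤ C₀ * (dist x y) ^ (2 - (d : ℝ))) →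
      (∀ x ∈ Ω, ∀ y ∈ Ω, ε ≤ dist x y → |G x y| ≤ C₀ * ε * (dist x y) ^ (1 - (d : ℝ))) →
      ∀ x ∈ Ω,
        (∫ y in Ω, |G x y| * |F y|)
          ≤ C * ε * (Real.log (M / ε + 2)) ^ (1 - 1 / (d : ℝ)) *
              (eLpNorm F (d : ℝ≥0∞) (volume.restrict Ω)).toReal := by
  have hdim : finrank ℝ (E d) = d := finrank_euclideanSpace_fin
  have hq : (d : ℝ).HolderConjugate (d : ℝ).conjExponent :=
    .conjExponent (by exact_mod_cast (by omega : 1 < d))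
  have hκ : 0 < ((d : ℝ≥0∞) * volume (ball (0 : E d) 1)).toReal := ENNReal.toReal_pos
    (mul_ne_zero (by exact_mod_cast (by omega : d ≠ 0)) (measure_ball_pos _ _ one_pos).ne')
    (by finiteness)
  refine ⟨C₀ * (2 * ((d : ℝ≥0∞) * volume (ball (0 : E d) 1)).toReal) ^
    (1 / (d : ℝ).conjExponent), by positivity, ?_⟩
  intro Ω M ε F G hΩ hbdd hdiam hε hεM hG hF hG1 hG2 x hx
  have hΩM : Ω ⊆ closedBall x M := fun y hy => (dist_le_diam_of_mem hbdd hy hx).trans hdiam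
  have hexp : 1 - 1 / (d : ℝ) = 1 / (d : ℝ).conjExponent := by
    rw [one_div, one_div, hq.one_sub_inv]
  rw [hexp]
  simpa only [hdim] using integral_abs_mul_abs_le_of_kernel_bound volume
    (q := (d : ℝ).conjExponent) (by rwa [hdim]) hΩ hε hεM
    hC₀.le hΩM hG.of_uncurry_left.aemeasurable (by rwa [hdim])
    (by simpa only [hdim] using hG1 x hx) (by simpa only [hdim] using hG2 x hx)
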